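/- Let N ≥ 3 be odd, (S,E) the cycle of length N, Vbar = V/(F·e_S), and fix an edge ee in E. Let B in phi(Vbar). If [ee] lies in L_B, then supp(B) ∩ ee = ∅ and |B| = (N−1)/2. -/

import Mathlib

/-- The induced subgraph of `adj` on `I` is a path (type `A_m`, `m ≥ 1`):
there is an injective enumeration `f : Fin (m+1) → S` of `I` such that two
elements of `I` are adjacent iff they are consecutive in the enumeration. -/
def IsPathOn {S : Type} [DecidableEq S] (adj : S → S → Prop) (I : Finset S) : Prop :=
  ∃ (m : ℕ) (f : Fin (m + 1) → S), Function.Injective f ∧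
    I = Finset.image f Finset.univ ∧
    ∀ i j : Fin (m + 1), adj (f i) (f j) ↔ ((i : ℕ) + 1 = (j : ℕ) ∨ (j : ℕ) + 1 = (i : ℕ))

/-- The induced subgraph of `adj` on `I` is connected. -/
def ConnOn {S : Type} (adj : S → S → Prop) (I : Finset S) : Prop :=
  ∀ s ∈ I, ∀ t ∈ I, Relation.ReflTransGen (fun a b => a ∈ I ∧ b ∈ I ∧ adj a b) s t

/-- `I ∈ Cal_I^1`: the induced subgraph on `I` is a path and `|I|` is odd. -/
def CalI1 {S : Type} [DecidableEq S] (adj : S → S → Prop) (I : Finset S) : Prop :=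
  IsPathOn adj I ∧ Odd I.card

/-- `I ≺ I'`. -/
def Prec {S : Type} [DecidableEq S] (adj : S → S → Prop) (I I' : Finset S) : Prop :=
  I ⊂ I' ∧ ¬ ConnOn adj (I' \ I)

/-- `I ♠ I'`. -/
def Spade {S : Type} [DecidableEq S] (adj : S → S → Prop) (I I' : Finset S) : Prop :=
  I ∩ I' = ∅ ∧ ¬ ConnOn adj (I ∪ I')

/-- `I^{ev}`: the set of `s ∈ I` such that `I ∖ {s}` is the disjoint union of
`I', I'' ∈ Cal_I^1` with `I' ♠ I''`. -/
def Iev {S : Type} [DecidableEq S] (adj : S → S → Prop) (I : Finset S) : Set S :=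
  {s | s ∈ I ∧ ∃ I' I'' : Finset S, CalI1 adj I' ∧ CalI1 adj I'' ∧
    Spade adj I' I'' ∧ I.erase s = I' ∪ I''}

/-- Property (P0). -/
def P0 {S : Type} [DecidableEq S] (adj : S → S → Prop) (B : Finset (Finset S)) : Prop :=
  ∀ I ∈ B, ∀ I' ∈ B, I = I' ∨ Spade adj I I' ∨ Prec adj I I' ∨ Prec adj I' I

/-- Property (P1). -/
def P1 {S : Type} [DecidableEq S] (adj : S → S → Prop) (B : Finset (Finset S)) : Prop :=
  ∀ I ∈ B, ∃ (k : ℕ) (f : Fin k → Finset S),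
    (∀ j, f j ∈ B ∧ Prec adj (f j) I) ∧
    (∀ j j', j ≠ j' → Disjoint (f j) (f j')) ∧
    Iev adj I ⊆ ⋃ j, ((f j : Finset S) : Set S)

/-- `phi`: finite sets `B` of elements of `Cal_I^1` satisfying (P0) and (P1). -/
def phiSet {S : Type} [DecidableEq S] (adj : S → S → Prop) : Set (Finset (Finset S)) :=
  {B | (∀ I ∈ B, CalI1 adj I) ∧ P0 adj B ∧ P1 adj B}

/-- `supp(B)`. -/
def suppB {S : Type} [DecidableEq S] (B : Finset (Finset S)) : Finset S := B.biUnion id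

/-- `g_s(B)`. -/
def gs {S : Type} [DecidableEq S] (B : Finset (Finset S)) (s : S) : ℕ :=
  (B.filter (fun I => s ∈ I)).card

/-- `e_I = ∑_{s ∈ I} e_s`. -/
def eSum {S : Type} {V : Type} [AddCommGroup V] [Module (ZMod 2) V]
    (e : S → V) (I : Finset S) : V := ∑ s ∈ I, e s

/-- `L_B`: the `F`-span of `{e_I : I ∈ B}`. -/
def LB {S : Type} {V : Type} [AddCommGroup V] [Module (ZMod 2) V]
    (e : S → V) (B : Finset (Finset S)) : Submodule (ZMod 2) V :=
  Submodule.span (ZMod 2) ((fun I => eSum e I) '' (B : Set (Finset S)))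

/-- `eps(B) = ∑_{s ∈ S} ((g_s(B)(g_s(B)+1)/2) mod 2) e_s`. -/
def epsB {S : Type} [DecidableEq S] [Fintype S] {V : Type} [AddCommGroup V]
    [Module (ZMod 2) V] (e : S → V) (B : Finset (Finset S)) : V :=
  ∑ s : S, ((gs B s * (gs B s + 1) / 2 : ℕ) : ZMod 2) • e s

/-- The triple `(V, <,>, e)` (with graph `adj`) is perfect. -/
def IsPerfect {S : Type} [DecidableEq S] [Fintype S] {V : Type} [AddCommGroup V]
    [Module (ZMod 2) V] (adj : S → S → Prop) (e : S → V) : Prop :=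
  (∀ B ∈ phiSet adj,
      (LinearIndependent (ZMod 2) (fun I : {I : Finset S // I ∈ B} => eSum e I.1)) ∧
      (∀ I : Finset S, CalI1 adj I → (eSum e I ∈ LB e B ↔ I ∈ B))) ∧
  (∀ B ∈ phiSet adj, epsB e B ∈ LB e B) ∧
  Set.BijOn (epsB e) (phiSet adj) (⋃ B ∈ phiSet adj, ((LB e B : Submodule (ZMod 2) V) : Set V)) ∧
  (∀ B ∈ phiSet adj, ∀ B' ∈ phiSet adj, epsB e B' ∈ LB e B → ∀ s : S, gs B' s ≤ gs B s)
/-- Adjacency of the cycle of length `N` on `S = ZMod N`. -/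
def cadj (N : ℕ) (i j : ZMod N) : Prop := j = i + 1 ∨ i = j + 1

/-- `V = F^S` for `S = ZMod N`. -/
abbrev Vc (N : ℕ) := ZMod N → ZMod 2

/-- The standard basis vector `e_s`. -/
def eVec (N : ℕ) (s : ZMod N) : Vc N := Pi.single s 1

/-- The line `F·e_S`, where `e_S = ∑_{s ∈ S} e_s`. -/
def radN (N : ℕ) [NeZero N] : Submodule (ZMod 2) (Vc N) :=
  Submodule.span (ZMod 2) {eSum (eVec N) Finset.univ}

/-- `Vbar = V / (F·e_S)`. -/
abbrev VbarN (N : ℕ) [NeZero N] := Vc N ⧸ radN N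

/-- The quotient map `pi : V → Vbar`. -/
def piQ (N : ℕ) [NeZero N] : Vc N →ₗ[ZMod 2] VbarN N := (radN N).mkQ

/-- `ebar_s = pi(e_s)`. -/
def ebar (N : ℕ) [NeZero N] (s : ZMod N) : VbarN N := piQ N (eVec N s)
open scoped Classical in
/-- The connected component of `s` in the induced subgraph of `adj` on `I`. -/
noncomputable def compOf {S : Type} [DecidableEq S] (adj : S → S → Prop)
    (I : Finset S) (s : S) : Finset S :=
  I.filter (fun t => Relation.ReflTransGen (fun a b => a ∈ I ∧ b ∈ I ∧ adj a b) s t)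

/-- `c(I)`: the set of vertex sets of connected components of the induced subgraph on `I`. -/
noncomputable def comps {S : Type} [DecidableEq S] (adj : S → S → Prop)
    (I : Finset S) : Finset (Finset S) :=
  I.image (compOf adj I)

/-- `|c^0(I)|`: the number of connected components of even cardinality. -/
noncomputable def c0card {S : Type} [DecidableEq S] (adj : S → S → Prop)
    (I : Finset S) : ℕ :=
  ((comps adj I).filter (fun C => Even C.card)).card

/-- `V_0 = {e_I : I ⊊ S with |c^0(I)| even}`. -/
def V0set (N : ℕ) [NeZero N] : Set (Vc N) :=
  {v | ∃ I : Finset (ZMod N), I ≠ Finset.univ ∧ Even (c0card (cadj N) I) ∧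
    v = eSum (eVec N) I}

/-- `V_1 = {e_S} ∪ {e_I : ∅ ≠ I ⊊ S with |c^0(I)| odd}`. -/
def V1set (N : ℕ) [NeZero N] : Set (Vc N) :=
  {v | v = eSum (eVec N) Finset.univ ∨ ∃ I : Finset (ZMod N), I ≠ ∅ ∧ I ≠ Finset.univ ∧
    Odd (c0card (cadj N) I) ∧ v = eSum (eVec N) I}
open scoped Classical in
/-- `I^{odd} = I ∖ I^{ev}` (as a `Finset`). -/
noncomputable def IoddF {S : Type} [DecidableEq S] (adj : S → S → Prop)
    (I : Finset S) : Finset S :=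
  I.filter (fun s => s ∉ Iev adj I)

/-- `n_B = |{I ∈ B : ee ⊆ I}|`. -/
def nB {S : Type} [DecidableEq S] (ee : Finset S) (B : Finset (Finset S)) : ℕ :=
  (B.filter (fun I => ee ⊆ I)).card

open scoped Classical in
/-- `B ↦ B^!`: remove the unique `I_B ∈ B` with `|I_B ∩ ee| = 1` when `n_B` is odd;
leave `B` unchanged when `n_B` is even. -/
noncomputable def bangF {S : Type} [DecidableEq S] (ee : Finset S)
    (B : Finset (Finset S)) : Finset (Finset S) :=
  if h : Odd (nB ee B) ∧ ∃ I ∈ B, (I ∩ ee).card = 1 then B.erase h.2.choose else B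

/-- `omega = {B^! : B ∈ phi}`. -/
def omegaSet {S : Type} [DecidableEq S] (adj : S → S → Prop) (ee : Finset S) :
    Set (Finset (Finset S)) :=
  (bangF ee) '' (phiSet adj)

open scoped Classical in
/-- `Btilde`: the unique element of `phi` with `Btilde^! = B`. -/
noncomputable def tildeF {S : Type} [DecidableEq S] (adj : S → S → Prop) (ee : Finset S)
    (C : Finset (Finset S)) : Finset (Finset S) :=
  if h : ∃ B ∈ phiSet adj, bangF ee B = C then h.choose else ∅

/-- `'eps(B) = eps(Btilde)`. -/
noncomputable def epsO {S : Type} [DecidableEq S] [Fintype S] {V : Type} [AddCommGroup V]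
    [Module (ZMod 2) V] (adj : S → S → Prop) (ee : Finset S) (e : S → V)
    (C : Finset (Finset S)) : V :=
  epsB e (tildeF adj ee C)

/-- `B' ⪯ B` on `omega`. -/
def preceqO {S : Type} [DecidableEq S] [Fintype S] {V : Type} [AddCommGroup V]
    [Module (ZMod 2) V] (adj : S → S → Prop) (ee : Finset S) (e : S → V)
    (B' B : Finset (Finset S)) : Prop :=
  ∃ (k : ℕ) (c : ℕ → Finset (Finset S)), c 0 = B' ∧ c k = B ∧
    (∀ i ≤ k, c i ∈ omegaSet adj ee) ∧
    (∀ i < k, epsO adj ee e (c i) ∈ LB e (c (i + 1)))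

/-- The linear form `v ↦ v t + v t'` on `V`. -/
def zeeV (N : ℕ) (t t' : ZMod N) : Vc N →ₗ[ZMod 2] ZMod 2 :=
  (LinearMap.proj t : Vc N →ₗ[ZMod 2] ZMod 2) + (LinearMap.proj t' : Vc N →ₗ[ZMod 2] ZMod 2)

/-- `z_ee : Vbar → F`, the linear map with `z_ee(ebar_s) = 1` iff `s ∈ ee = {t,t'}`. -/
noncomputable def zee (N : ℕ) [NeZero N] (t t' : ZMod N) : VbarN N →ₗ[ZMod 2] ZMod 2 :=
  Submodule.liftQ (radN N) (zeeV N t t') (by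
    rw [radN, Submodule.span_le, Set.singleton_subset_iff]
    have h1 : ∀ u : ZMod N, (eSum (eVec N) Finset.univ) u = 1 := by
      intro u
      simp [eSum, eVec, Finset.sum_apply, Finset.sum_pi_single]
    simp only [SetLike.mem_coe, LinearMap.mem_ker, zeeV, LinearMap.add_apply,
      LinearMap.proj_apply, h1]
    decide)
/-- The maximal elements of a finite family of finsets, under inclusion. -/
def maxElts {S : Type} [DecidableEq S] (C : Finset (Finset S)) : Finset (Finset S) :=
  C.filter (fun I => ∀ I' ∈ C, ¬ I ⊂ I')

/-- `restB B k = B ∖ (B_1 ∪ … ∪ B_k)`: what remains of `B` after removing the first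
`k` layers; the `k`-th layer (`k ≥ 1`) is `B_k = maxElts (restB B (k-1))`. -/
def restB {S : Type} [DecidableEq S] (B : Finset (Finset S)) : ℕ → Finset (Finset S)
  | 0 => B
  | k + 1 => restB B k \ maxElts (restB B k)

/-- The relation `B' ≤ B` on `phi(V)`. -/
def lePhi {S : Type} [DecidableEq S] [Fintype S] {V : Type} [AddCommGroup V]
    [Module (ZMod 2) V] (adj : S → S → Prop) (e : S → V)
    (B' B : Finset (Finset S)) : Prop :=
  ∃ (k : ℕ) (c : ℕ → Finset (Finset S)), c 0 = B' ∧ c k = B ∧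
    (∀ i ≤ k, c i ∈ phiSet adj) ∧
    (∀ i < k, epsB e (c i) ∈ LB e (c (i + 1)))
/-!
Members of `B` are arcs of odd length of the cycle, and (P0) says two of them are either
separated (disjoint and non-adjacent) or nested with the inner one strictly inside the outer.
`S ∖ ee` is the arc `{t+2, …, t-1}` and `A = (S ∖ ee)^odd` is the set of its even positions:
`(N-1)/2` pairwise non-adjacent vertices.

The quadratic form `Q v = ∑ₛ vₛ vₛ₊₁` counts the cycle edges inside a support. It vanishes
on each `e_I` (an odd arc has an even number of edges) and its polar form vanishes on pairs of
members, so `Q` vanishes on the span of the `e_I` in `V`. As `N` is odd, `Q (e_A + e_S) = 1`,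
so `[ee] ∈ L_B` lifts to `e_A ∈ span {e_I}`, and hence `A ⊆ supp B`.

Thickening `X ↦ X ∪ (X + 1)` adds one point to an arc, doubles a set without two consecutive
points, and keeps separated sets disjoint. With it, induction along the nesting shows that each
`I ∈ B` contains exactly `(|I| + 1)/2` members of `B` ((P1) for the lower bound, packing of the
maximal proper sub-members for the upper one). Summing over the maximal members `R`:
`N - 1 = 2|A| ≤ ∑_R (|R| + 1) = 2|B| ≤ N`, so `2|B| = N - 1` and each `R` meets `A` in
`(|R| + 1)/2` points. Then the thickening of `A ∩ R` fills that of `R`, which fails if `R`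
contains `t` or `t + 1`: the point `t + 1` lies in the latter but not in the former.
-/

open Finset

section General

lemma eq_of_union_eq_union {α : Type*} [DecidableEq α] {P Q X Y : Finset α} (hPQ : Disjoint P Q)
    (h : X ∪ Y = P ∪ Q) (hX : X ⊆ P) (hY : Y ⊆ Q) : X = P :=
  hX.antisymm fun _ hp => (mem_union.1 (h ▸ mem_union_left Q hp)).resolve_right
    fun hpY => disjoint_left.1 hPQ hp (hY hpY)

lemma card_filter_even_range (L : ℕ) : #{i ∈ range L | Even i} = (L + 1) / 2 := by
  induction L with
  | zero => rfl
  | succ L ih =>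
    rw [range_add_one, filter_insert]
    split_ifs with h
    · rw [card_insert_of_notMem (by simp), ih]
      rw [Nat.even_iff] at h
      omega
    · rw [ih]
      rw [Nat.not_even_iff] at h
      omega

lemma card_filter_odd_range (L : ℕ) : #{i ∈ range L | Odd i} = L / 2 := by
  have := card_filter_add_card_filter_not (s := range L) (p := fun i => Even i)
  simp only [Nat.not_even_iff_odd, card_range, card_filter_even_range] at this
  omega

lemma IoddF_subset {S : Type} [DecidableEq S] (adj : S → S → Prop) (I : Finset S) :
    IoddF adj I ⊆ I := by
  classical
  exact filter_subset _ _

lemma mem_maxElts {α : Type} [DecidableEq α] {C : Finset (Finset α)} {R : Finset α} :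
    R ∈ maxElts C ↔ R ∈ C ∧ ∀ K ∈ C, ¬ R ⊂ K :=
  mem_filter

lemma exists_mem_maxElts_superset {α : Type} [DecidableEq α] {C : Finset (Finset α)}
    {K : Finset α} (hK : K ∈ C) : ∃ R ∈ maxElts C, K ⊆ R := by
  obtain ⟨R, hR, hmax⟩ :=
    exists_max_image {J ∈ C | K ⊆ J} card ⟨K, mem_filter.2 ⟨hK, subset_rfl⟩⟩
  rw [mem_filter] at hR
  refine ⟨R, mem_maxElts.2 ⟨hR.1, fun J hJ hRJ => ?_⟩, hR.2⟩
  exact (card_lt_card hRJ).not_ge (hmax J (mem_filter.2 ⟨hJ, hR.2.trans hRJ.subset⟩))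

lemma card_eq_sum_maxElts {α : Type} [DecidableEq α] {C : Finset (Finset α)}
    (hC : ∀ K ∈ C, K.Nonempty) (hdisj : (maxElts C : Set (Finset α)).Pairwise Disjoint) :
    #C = ∑ R ∈ maxElts C, #{K ∈ C | K ⊆ R} := by
  rw [← card_biUnion]
  · congr 1
    ext K
    simp only [mem_biUnion, mem_filter]
    refine ⟨fun hK => ?_, fun ⟨_, _, hK, _⟩ => hK⟩
    obtain ⟨R, hR, hKR⟩ := exists_mem_maxElts_superset hK
    exact ⟨R, hR, hK, hKR⟩
  · intro R hR R' hR' hne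
    refine disjoint_left.2 fun K hK hK' => ?_
    obtain ⟨x, hx⟩ := hC K (mem_filter.1 hK).1
    exact disjoint_left.1 (hdisj hR hR' hne) ((mem_filter.1 hK).2 hx) ((mem_filter.1 hK').2 hx)

theorem QuadraticMap.eq_zero_of_mem_span {R M P : Type*} [CommRing R] [AddCommGroup M]
    [Module R M] [AddCommGroup P] [Module R P] (Q : QuadraticMap R M P) {s : Set M}
    (hQ : ∀ x ∈ s, Q x = 0) (hpolar : s.Pairwise fun x y => polar Q x y = 0) {v : M}
    (hv : v ∈ Submodule.span R s) : Q v = 0 := by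
  have hpolar_mem : ∀ y ∈ s, ∀ u ∈ Submodule.span R s, polar Q u y = 0 := by
    intro y hy u hu
    induction hu using Submodule.span_induction with
    | mem x hx =>
      rcases eq_or_ne x y with rfl | hxy
      · rw [polar_self, hQ x hx, smul_zero]
      · exact hpolar hx hy hxy
    | zero => exact polar_zero_left Q y
    | add x z _ _ hx hz => rw [polar_add_left, hx, hz, add_zero]
    | smul c x _ hx => rw [polar_smul_left, hx, smul_zero]
  have hpolar_span :
      ∀ u ∈ Submodule.span R s, ∀ w ∈ Submodule.span R s, polar Q u w = 0 := by
    intro u hu w hw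
    induction hw using Submodule.span_induction with
    | mem y hy => exact hpolar_mem y hy u hu
    | zero => exact polar_zero_right Q u
    | add x z _ _ hx hz => rw [polar_add_right, hx, hz, add_zero]
    | smul c x _ hx => rw [polar_smul_right, hx, smul_zero]
  induction hv using Submodule.span_induction with
  | mem x hx => exact hQ x hx
  | zero => exact map_zero Q
  | add x y hx hy ihx ihy =>
    have := hpolar_span x hx y hy
    rwa [polar, ihx, ihy, sub_zero, sub_zero] at this
  | smul c x _ ih => rw [QuadraticMap.map_smul, ih, smul_zero]

end General

section Arcs

variable {N : ℕ}

def arc (a : ZMod N) (L : ℕ) : Finset (ZMod N) := (range L).image fun i : ℕ => a + i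

lemma mem_arc {a x : ZMod N} {L : ℕ} : x ∈ arc a L ↔ ∃ i < L, a + i = x := by
  simp [arc]

lemma arc_add_natCast (a : ZMod N) (c M : ℕ) :
    arc (a + (c : ZMod N)) M = (Ico c (c + M)).image fun i : ℕ => a + i := by
  ext x
  simp only [mem_arc, mem_image, mem_Ico]
  constructor
  · rintro ⟨j, hj, rfl⟩
    exact ⟨c + j, by omega, by push_cast; ring⟩
  · rintro ⟨i, hi, rfl⟩
    exact ⟨i - c, by omega, by rw [add_assoc, ← Nat.cast_add, Nat.add_sub_cancel' hi.1]⟩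

lemma cadj_comm {x y : ZMod N} : cadj N x y ↔ cadj N y x := Or.comm

lemma natCast_inj_of_lt {i j : ℕ} (hi : i < N) (hj : j < N) : (i : ZMod N) = j ↔ i = j := by
  rw [ZMod.natCast_eq_natCast_iff' i j N, Nat.mod_eq_of_lt hi, Nat.mod_eq_of_lt hj]

lemma natCast_eq_natCast_add_one_iff {i j : ℕ} (hi : i < N) (hj : j < N) :
    (j : ZMod N) = i + 1 ↔ j = i + 1 ∨ (j = 0 ∧ i + 1 = N) := by
  rw [← Nat.cast_succ, ZMod.natCast_eq_natCast_iff' j _ N, Nat.mod_eq_of_lt hj]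
  rcases (Nat.succ_le_of_lt hi).lt_or_eq with h | h
  · rw [Nat.mod_eq_of_lt h]; omega
  · rw [h, Nat.mod_self]; omega

lemma add_natCast_mem_image_iff {a : ZMod N} {O : Finset ℕ} (hO : ∀ j ∈ O, j < N) {i : ℕ}
    (hi : i < N) : a + i ∈ O.image (fun j : ℕ => a + j) ↔ i ∈ O := by
  simp only [mem_image, add_right_inj]
  exact ⟨fun ⟨j, hj, hji⟩ => (natCast_inj_of_lt (hO j hj) hi).1 hji ▸ hj,
    fun h => ⟨i, h, rfl⟩⟩

lemma card_image_add_natCast (a : ZMod N) {O : Finset ℕ} (hO : ∀ j ∈ O, j < N) :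
    #(O.image fun j : ℕ => a + j) = #O :=
  card_image_of_injOn fun i hi j hj h =>
    (natCast_inj_of_lt (hO i hi) (hO j hj)).1 (add_left_cancel h)

lemma cadj_add_natCast_iff (a : ZMod N) {i j : ℕ} (hi : i < N) (hj : j < N) :
    cadj N (a + i) (a + j) ↔
      j = i + 1 ∨ i = j + 1 ∨ (j = 0 ∧ i + 1 = N) ∨ (i = 0 ∧ j + 1 = N) := by
  simp only [cadj, add_assoc, add_right_inj, natCast_eq_natCast_add_one_iff hi hj,
    natCast_eq_natCast_add_one_iff hj hi]
  tauto

lemma add_one_notMem_image_add_natCast {a : ZMod N} {O : Finset ℕ} (hO : ∀ j ∈ O, j + 1 < N)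
    (h : ∀ j ∈ O, j + 1 ∉ O) :
    ∀ s ∈ O.image (fun j : ℕ => a + j), s + 1 ∉ O.image (fun j : ℕ => a + j) := by
  intro s hs
  obtain ⟨j, hj, rfl⟩ := mem_image.1 hs
  rw [add_assoc, ← Nat.cast_add_one,
    add_natCast_mem_image_iff (fun k hk => by have := hO k hk; omega) (hO j hj)]
  exact h j hj

lemma add_natCast_mem_arc_iff {a : ZMod N} {L i : ℕ} (hL : L ≤ N) (hi : i < N) :
    a + i ∈ arc a L ↔ i < L := by
  rw [arc, add_natCast_mem_image_iff (fun j hj => by simp at hj; omega) hi, mem_range]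

lemma add_natCast_mem_arc_add_iff {a : ZMod N} {c M i : ℕ} (h : c + M ≤ N) (hi : i < N) :
    a + i ∈ arc (a + (c : ZMod N)) M ↔ c ≤ i ∧ i < c + M := by
  rw [arc_add_natCast, add_natCast_mem_image_iff (fun j hj => by simp at hj; omega) hi, mem_Ico]

lemma card_arc (a : ZMod N) {L : ℕ} (hL : L ≤ N) : #(arc a L) = L := by
  rw [arc, card_image_add_natCast a (fun j hj => by simp at hj; omega), card_range]

@[simp] lemma arc_zero (a : ZMod N) : arc a 0 = ∅ := by simp [arc]

lemma self_mem_arc (a : ZMod N) {L : ℕ} (hL : 0 < L) : a ∈ arc a L :=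
  mem_arc.2 ⟨0, hL, by simp⟩

variable [NeZero N]

-- Writing points as `a + i` with `i < N` turns membership in sub-arcs of `arc a L` into linear
-- arithmetic on the offsets, which `omega` then settles.
lemma exists_eq_add_natCast (a x : ZMod N) : ∃ i < N, x = a + i :=
  ⟨(x - a).val, ZMod.val_lt _, by simp⟩

lemma sub_one_notMem_arc (a : ZMod N) {L : ℕ} (hL : L < N) : a - 1 ∉ arc a L := by
  have : a - 1 = a + ((N - 1 : ℕ) : ZMod N) := by
    rw [Nat.cast_sub (NeZero.one_le), ZMod.natCast_self]; ring
  rw [this, add_natCast_mem_arc_iff hL.le (by omega)]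
  omega

end Arcs

section Connectivity

variable {N : ℕ}

def Separated (X Y : Finset (ZMod N)) : Prop := ∀ x ∈ X, ∀ y ∈ Y, x ≠ y ∧ ¬ cadj N x y

lemma Separated.symm {X Y : Finset (ZMod N)} (h : Separated X Y) : Separated Y X :=
  fun y hy x hx => ⟨(h x hx y hy).1.symm, fun hyx => (h x hx y hy).2 (cadj_comm.1 hyx)⟩

lemma connOn_of_reflTransGen {I : Finset (ZMod N)} {x : ZMod N}
    (h : ∀ s ∈ I, Relation.ReflTransGen (fun a b => a ∈ I ∧ b ∈ I ∧ cadj N a b) x s) :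
    ConnOn (cadj N) I := by
  have : Std.Symm fun a b => a ∈ I ∧ b ∈ I ∧ cadj N a b :=
    ⟨fun _ _ hab => ⟨hab.2.1, hab.1, cadj_comm.1 hab.2.2⟩⟩
  exact fun s hs t ht => (Relation.ReflTransGen.stdSymm.symm _ _ (h s hs)).trans (h t ht)

lemma connOn_arc (a : ZMod N) (L : ℕ) : ConnOn (cadj N) (arc a L) := by
  refine connOn_of_reflTransGen (x := a) fun s hs => ?_
  obtain ⟨i, hi, rfl⟩ := mem_arc.1 hs
  induction i with
  | zero => simpa using Relation.ReflTransGen.refl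
  | succ i ih =>
    have hi' : a + (i : ZMod N) ∈ arc a L := mem_arc.2 ⟨i, by omega, rfl⟩
    exact (ih (by omega) hi').tail ⟨hi', hs, Or.inl (by push_cast; ring)⟩

lemma ConnOn.subset_of_mem {K X Y : Finset (ZMod N)} (hK : ConnOn (cadj N) K)
    (hKXY : K ⊆ X ∪ Y) (hXY : Separated X Y) {u : ZMod N} (hu : u ∈ K) (huX : u ∈ X) :
    K ⊆ X := by
  intro v hv
  induction hK u hu v hv with
  | refl => exact huX
  | tail _ hbc ih =>
    obtain ⟨hb, hc, hadj⟩ := hbc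
    exact (mem_union.1 (hKXY hc)).resolve_right fun hcY => (hXY _ (ih hb) _ hcY).2 hadj

lemma ConnOn.subset_or_subset {K X Y : Finset (ZMod N)} (hK : ConnOn (cadj N) K)
    (hKXY : K ⊆ X ∪ Y) (hXY : Separated X Y) : K ⊆ X ∨ K ⊆ Y := by
  rcases K.eq_empty_or_nonempty with rfl | ⟨u, hu⟩
  · exact Or.inl (empty_subset X)
  rcases mem_union.1 (hKXY hu) with huX | huY
  · exact Or.inl (hK.subset_of_mem hKXY hXY hu huX)
  · exact Or.inr (hK.subset_of_mem (union_comm X Y ▸ hKXY) hXY.symm hu huY)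

lemma Separated.not_connOn_union {X Y : Finset (ZMod N)} (h : Separated X Y)
    (hX : X.Nonempty) (hY : Y.Nonempty) : ¬ ConnOn (cadj N) (X ∪ Y) := by
  intro hconn
  obtain ⟨x, hx⟩ := hX
  obtain ⟨y, hy⟩ := hY
  rcases hconn.subset_or_subset subset_rfl h with hsub | hsub
  · exact (h _ (hsub (mem_union_right X hy)) y hy).1 rfl
  · exact (h x hx _ (hsub (mem_union_left Y hx))).1 rfl

lemma ConnOn.union_of_cadj {X Y : Finset (ZMod N)} (hX : ConnOn (cadj N) X)
    (hY : ConnOn (cadj N) Y) {x y : ZMod N} (hx : x ∈ X) (hy : y ∈ Y) (hxy : cadj N x y) :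
    ConnOn (cadj N) (X ∪ Y) := by
  have lift : ∀ {Z : Finset (ZMod N)}, Z ⊆ X ∪ Y → ∀ {u v}, 
      Relation.ReflTransGen (fun a b => a ∈ Z ∧ b ∈ Z ∧ cadj N a b) u v →
      Relation.ReflTransGen (fun a b => a ∈ X ∪ Y ∧ b ∈ X ∪ Y ∧ cadj N a b) u v :=
    fun hZ _ _ => Relation.ReflTransGen.mono (fun _ _ h => ⟨hZ h.1, hZ h.2.1, h.2.2⟩) _ _
  refine connOn_of_reflTransGen (x := x) fun s hs => ?_
  rcases mem_union.1 hs with hsX | hsY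
  · exact lift subset_union_left (hX x hx s hsX)
  · exact .head ⟨mem_union_left Y hx, mem_union_right X hy, hxy⟩
      (lift subset_union_right (hY y hy s hsY))

lemma separated_of_spade {X Y : Finset (ZMod N)} (hX : ConnOn (cadj N) X)
    (hY : ConnOn (cadj N) Y) (h : Spade (cadj N) X Y) : Separated X Y := by
  refine fun x hx y hy => ⟨fun hxy => ?_, fun hadj => h.2 (hX.union_of_cadj hY hx hy hadj)⟩
  have : x ∈ X ∩ Y := mem_inter.2 ⟨hx, hxy ▸ hy⟩
  simp [h.1] at this

lemma Separated.disjoint {X Y : Finset (ZMod N)} (h : Separated X Y) : Disjoint X Y :=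
  disjoint_left.2 fun x hx hxY => (h x hx x hxY).1 rfl

lemma Separated.spade {X Y : Finset (ZMod N)} (h : Separated X Y) (hX : X.Nonempty)
    (hY : Y.Nonempty) : Spade (cadj N) X Y :=
  ⟨disjoint_iff_inter_eq_empty.1 h.disjoint, h.not_connOn_union hX hY⟩

lemma separated_arc_arc_add {a : ZMod N} {i L : ℕ} (hL : L < N) :
    Separated (arc a i) (arc (a + (i + 1 : ℕ)) (L - (i + 1))) := by
  intro x hx y hy
  obtain ⟨p, hp, rfl⟩ := mem_arc.1 hx
  rw [arc_add_natCast] at hy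
  obtain ⟨q, hq, rfl⟩ := mem_image.1 hy
  simp only [mem_Ico] at hq
  rw [Ne, add_right_inj, natCast_inj_of_lt (by omega) (by omega),
    cadj_add_natCast_iff a (by omega) (by omega)]
  omega

end Connectivity

section Paths

variable {N : ℕ}

lemma isPathOn_arc (a : ZMod N) {L : ℕ} (h1 : 1 ≤ L) (h2 : L < N) :
    IsPathOn (cadj N) (arc a L) := by
  obtain ⟨m, rfl⟩ : ∃ m, L = m + 1 := ⟨L - 1, by omega⟩
  refine ⟨m, fun i => a + (i : ℕ), fun i j h => Fin.ext ?_, ?_, fun i j => ?_⟩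
  · exact (natCast_inj_of_lt (by omega) (by omega)).1 (add_left_cancel h)
  · ext x
    simp [mem_arc, Fin.exists_iff]
  · rw [cadj_add_natCast_iff a (by omega) (by omega)]
    omega

lemma IsPathOn.connOn {I : Finset (ZMod N)} (h : IsPathOn (cadj N) I) :
    ConnOn (cadj N) I := by
  obtain ⟨m, f, -, rfl, hadj⟩ := h
  refine connOn_of_reflTransGen (x := f 0) fun s hs => ?_
  obtain ⟨i, -, rfl⟩ := mem_image.1 hs
  induction i using Fin.induction with
  | zero => exact .refl
  | succ i ih =>
    exact .tail (ih (by simp)) ⟨by simp, by simp, (hadj _ _).2 (Or.inl (by simp))⟩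

lemma IsPathOn.ne_univ [NeZero N] (hN : 3 ≤ N) {I : Finset (ZMod N)}
    (h : IsPathOn (cadj N) I) : I ≠ univ := by
  obtain ⟨m, f, -, rfl, hadj⟩ := h
  intro huniv
  have hmem : ∀ x, ∃ i, f i = x := fun x => by
    simpa using (huniv.symm ▸ mem_univ x : x ∈ image f univ)
  obtain ⟨i, hi⟩ := hmem (f 0 + 1)
  obtain ⟨j, hj⟩ := hmem (f 0 - 1)
  have hi1 : (i : ℕ) = 1 := by
    have := (hadj 0 i).1 (Or.inl hi); simp at this; omega
  have hj1 : (j : ℕ) = 1 := by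
    have := (hadj 0 j).1 (Or.inr (by rw [hj]; ring)); simp at this; omega
  have h2 : ((2 : ℕ) : ZMod N) = 0 := by
    have : f 0 + 1 = f 0 - 1 := by rw [← hi, ← hj, Fin.ext (hi1.trans hj1.symm)]
    push_cast; linear_combination this
  have := Nat.le_of_dvd two_pos ((ZMod.natCast_eq_zero_iff 2 N).1 h2)
  omega

lemma exists_mem_sub_one_notMem [NeZero N] {I : Finset (ZMod N)} (hne : I.Nonempty)
    (huniv : I ≠ univ) : ∃ a ∈ I, a - 1 ∉ I := by
  by_contra! hclosed
  obtain ⟨x, hx⟩ := hne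
  have hsub : ∀ k : ℕ, x - k ∈ I := fun k => by
    induction k with
    | zero => simpa using hx
    | succ k ih => simpa [sub_add_eq_sub_sub] using hclosed _ ih
  exact huniv (eq_univ_of_forall fun y => by simpa using hsub (x - y).val)

lemma ConnOn.exists_eq_arc [NeZero N] {I : Finset (ZMod N)} (hI : ConnOn (cadj N) I)
    (hne : I.Nonempty) (huniv : I ≠ univ) : ∃ a L, I = arc a L ∧ L < N := by
  classical
  obtain ⟨a, ha, ha'⟩ := exists_mem_sub_one_notMem hne huniv
  obtain ⟨z, hz⟩ : ∃ z, z ∉ I := not_forall.1 fun h => huniv (eq_univ_of_forall h)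
  obtain ⟨k, hk, rfl⟩ := exists_eq_add_natCast a z
  have hex : ∃ k : ℕ, a + (k : ZMod N) ∉ I := ⟨k, hz⟩
  have hLN : Nat.find hex < N := (Nat.find_min' hex hz).trans_lt hk
  -- `a + Nat.find hex` is the first point after `a` outside `I`; a walk from `a` inside `I`
  -- could only leave the arc in between through `a - 1` or that point.
  refine ⟨a, Nat.find hex, Subset.antisymm (fun s hs => ?_) (fun s hs => ?_), hLN⟩
  · induction hI a ha s hs with
    | refl => exact mem_arc.2 ⟨0, Nat.pos_of_ne_zero fun h0 => by simp_all, by simp⟩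
    | @tail b c _ hbc ih =>
      obtain ⟨hb, hc, hadj⟩ := hbc
      obtain ⟨i, hi, rfl⟩ := mem_arc.1 (ih hb)
      rcases hadj with rfl | hc'
      · refine mem_arc.2 ⟨i + 1, ?_, by push_cast; ring⟩
        by_contra hge
        have : i + 1 = Nat.find hex := by omega
        exact Nat.find_spec hex (by rw [← this]; push_cast; rwa [← add_assoc])
      · obtain ⟨j, rfl⟩ : ∃ j, i = j + 1 := by
          refine Nat.exists_eq_add_one.2 (Nat.pos_of_ne_zero fun h0 => ha' ?_)
          rw [h0, Nat.cast_zero, add_zero, ← sub_eq_iff_eq_add] at hc'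
          exact hc' ▸ hc
        exact mem_arc.2 ⟨j, by omega, add_right_cancel (by rw [← hc']; push_cast; ring)⟩
  · obtain ⟨i, hi, rfl⟩ := mem_arc.1 hs
    exact not_not.1 (Nat.find_min hex hi)

lemma CalI1.exists_eq_arc [NeZero N] (hN : 3 ≤ N) {I : Finset (ZMod N)}
    (h : CalI1 (cadj N) I) : ∃ a L, I = arc a L ∧ Odd L ∧ L < N := by
  obtain ⟨a, L, rfl, hL⟩ :=
    ConnOn.exists_eq_arc h.1.connOn (card_pos.1 h.2.pos) (h.1.ne_univ hN)
  exact ⟨a, L, rfl, card_arc a hL.le ▸ h.2, hL⟩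

lemma calI1_arc [NeZero N] (a : ZMod N) {L : ℕ} (hodd : Odd L) (hL : L < N) :
    CalI1 (cadj N) (arc a L) :=
  ⟨isPathOn_arc a hodd.pos hL, by rwa [card_arc a hL.le]⟩

end Paths

section Members

variable {N : ℕ} {B : Finset (Finset (ZMod N))}

lemma nonempty_of_mem_phiSet (hB : B ∈ phiSet (cadj N)) {I : Finset (ZMod N)} (hI : I ∈ B) :
    I.Nonempty :=
  card_pos.1 (hB.1 I hI).2.pos

lemma prec_of_ssubset (hB : B ∈ phiSet (cadj N)) {I J : Finset (ZMod N)} (hI : I ∈ B)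
    (hJ : J ∈ B) (h : J ⊂ I) : Prec (cadj N) J I := by
  rcases hB.2.1 J hJ I hI with rfl | hspade | hprec | hprec
  · exact absurd h (ssubset_irrefl J)
  · obtain ⟨x, hx⟩ := nonempty_of_mem_phiSet hB hJ
    have : x ∈ J ∩ I := mem_inter.2 ⟨hx, h.subset hx⟩
    simp [hspade.1] at this
  · exact hprec
  · exact absurd hprec.1 h.asymm

lemma separated_of_not_subset (hB : B ∈ phiSet (cadj N)) {I J : Finset (ZMod N)} (hI : I ∈ B)
    (hJ : J ∈ B) (hIJ : ¬ I ⊆ J) (hJI : ¬ J ⊆ I) : Separated I J := by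
  rcases hB.2.1 I hI J hJ with rfl | hspade | hprec | hprec
  · exact absurd subset_rfl hIJ
  · exact separated_of_spade (hB.1 I hI).1.connOn (hB.1 J hJ).1.connOn hspade
  · exact absurd hprec.1.subset hIJ
  · exact absurd hprec.1.subset hJI

variable [NeZero N]

lemma arc_sdiff_arc_add {a : ZMod N} {L c M : ℕ} (h : c + M ≤ L) (hL : L ≤ N) :
    arc a L \ arc (a + c) M = arc a c ∪ arc (a + (c + M : ℕ)) (L - (c + M)) := by
  ext x
  obtain ⟨i, hi, rfl⟩ := exists_eq_add_natCast a x
  simp only [mem_sdiff, mem_union, add_natCast_mem_arc_iff (by omega : L ≤ N) hi,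
    add_natCast_mem_arc_iff (by omega : c ≤ N) hi,
    add_natCast_mem_arc_add_iff (c := c) (M := M) (by omega) hi,
    add_natCast_mem_arc_add_iff (c := c + M) (M := L - (c + M)) (by omega) hi]
  omega

lemma arc_erase {a : ZMod N} {L i : ℕ} (hi : i < L) (hL : L ≤ N) :
    (arc a L).erase (a + i) = arc a i ∪ arc (a + (i + 1 : ℕ)) (L - (i + 1)) := by
  rw [erase_eq, ← arc_sdiff_arc_add (M := 1) (by omega) hL]
  simp [arc]

lemma Prec.sub_one_mem_and_add_one_mem (hN : 3 ≤ N) {I J : Finset (ZMod N)}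
    (hI : CalI1 (cadj N) I) (hJ : CalI1 (cadj N) J) (h : Prec (cadj N) J I) {s : ZMod N}
    (hs : s ∈ J) : s - 1 ∈ I ∧ s + 1 ∈ I := by
  obtain ⟨a, L, rfl, -, hL⟩ := hI.exists_eq_arc hN
  obtain ⟨b, M, rfl, hM, -⟩ := hJ.exists_eq_arc hN
  obtain ⟨c, hcL, rfl⟩ := mem_arc.1 (h.1.subset (self_mem_arc b hM.pos))
  have hcM : c + M ≤ L := by
    by_contra hlt
    have : a + (L : ZMod N) ∈ arc (a + (c : ZMod N)) M :=
      mem_arc.2 ⟨L - c, by omega, by rw [add_assoc, ← Nat.cast_add]; congr 2; omega⟩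
    have := (add_natCast_mem_arc_iff hL.le hL).1 (h.1.subset this)
    omega
  -- `arc a L \ J` is disconnected, so `J` touches neither end of `arc a L`.
  have hsdiff := arc_sdiff_arc_add (a := a) hcM hL.le
  have hc : 1 ≤ c := by
    by_contra hc0
    obtain rfl : c = 0 := by omega
    apply h.2
    rw [hsdiff, arc_zero, empty_union]
    exact connOn_arc _ _
  have hcML : c + M < L := by
    by_contra hge
    apply h.2
    rw [hsdiff, show L - (c + M) = 0 by omega, arc_zero, union_empty]
    exact connOn_arc a c
  obtain ⟨j, hj, rfl⟩ := mem_arc.1 hs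
  refine ⟨mem_arc.2 ⟨c + j - 1, by omega, ?_⟩,
    mem_arc.2 ⟨c + j + 1, by omega, by push_cast; ring⟩⟩
  push_cast [Nat.cast_sub (by omega : 1 ≤ c + j)]
  ring

lemma add_natCast_mem_Iev_arc {a : ZMod N} {L i : ℕ} (hodd : Odd L) (hL : L < N) (hi : i < L)
    (hi' : Odd i) : a + i ∈ Iev (cadj N) (arc a L) := by
  have hL' : Odd (L - (i + 1)) := by
    obtain ⟨l, rfl⟩ := hodd; obtain ⟨k, rfl⟩ := hi'; exact ⟨l - k - 1, by omega⟩
  refine ⟨mem_arc.2 ⟨i, hi, rfl⟩, _, _, calI1_arc a hi' (by omega),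
    calI1_arc _ hL' (by omega), (separated_arc_arc_add hL).spade ?_ ?_, arc_erase hi hL.le⟩
  · exact ⟨a, self_mem_arc a hi'.pos⟩
  · exact ⟨_, self_mem_arc _ hL'.pos⟩

lemma odd_of_add_natCast_mem_Iev_arc {a : ZMod N} {L i : ℕ} (hL : L < N) (hi : i < N)
    (h : a + i ∈ Iev (cadj N) (arc a L)) : Odd i := by
  obtain ⟨hmem, I', I'', hI', hI'', hspade, herase⟩ := h
  have hiL : i < L := (add_natCast_mem_arc_iff hL.le hi).1 hmem
  set P := arc a i
  set Q := arc (a + ((i + 1 : ℕ) : ZMod N)) (L - (i + 1))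
  have hPQ : Separated P Q := separated_arc_arc_add hL
  have hunion : I' ∪ I'' = P ∪ Q := herase ▸ arc_erase hiL hL.le
  -- `P` and `Q` are nonempty, and the connected `I'`, `I''` cannot lie on the same side, so one
  -- of them is `P`, whose size `i` is therefore odd.
  obtain ⟨p, hp⟩ : P.Nonempty := by
    refine nonempty_iff_ne_empty.2 fun hP0 => hspade.2 ?_
    rw [hunion, hP0, empty_union]
    exact connOn_arc _ _
  obtain ⟨q, hq⟩ : Q.Nonempty := by
    refine nonempty_iff_ne_empty.2 fun hQ0 => hspade.2 ?_
    rw [hunion, hQ0, union_empty]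
    exact connOn_arc _ _
  rcases hI'.1.connOn.subset_or_subset (hunion ▸ subset_union_left) hPQ with h1 | h1 <;>
    rcases hI''.1.connOn.subset_or_subset (hunion ▸ subset_union_right) hPQ with h2 | h2
  · have hq' : q ∈ I' ∪ I'' := by rw [hunion]; exact mem_union_right P hq
    exact absurd rfl (hPQ q (union_subset h1 h2 hq') q hq).1
  · rw [← card_arc a (hiL.trans hL).le]
    change Odd #P
    rw [← eq_of_union_eq_union hPQ.disjoint hunion h1 h2]
    exact hI'.2
  · rw [← card_arc a (hiL.trans hL).le]
    change Odd #P
    rw [← eq_of_union_eq_union hPQ.disjoint (union_comm I' I'' ▸ hunion) h2 h1]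
    exact hI''.2
  · have hp' : p ∈ I' ∪ I'' := by rw [hunion]; exact mem_union_left Q hp
    exact absurd rfl (hPQ p hp p (union_subset h1 h2 hp')).1

lemma exists_independent_subset_Iev_arc (a : ZMod N) {L : ℕ} (hodd : Odd L) (hL : L < N) :
    ∃ O : Finset (ZMod N), (∀ s ∈ O, s + 1 ∉ O) ∧ 2 * #O + 1 = L ∧
      ∀ s ∈ O, s ∈ Iev (cadj N) (arc a L) := by
  have hlt : ∀ i ∈ {i ∈ range L | Odd i}, i + 1 < N := fun i hi => by
    simp only [mem_filter, mem_range] at hi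
    omega
  refine ⟨{i ∈ range L | Odd i}.image fun i : ℕ => a + i, ?_, ?_, fun s hs => ?_⟩
  · refine add_one_notMem_image_add_natCast hlt fun i hi hi1 => ?_
    simp only [mem_filter] at hi hi1
    exact Nat.not_odd_iff_even.2 (Nat.even_add_one.2 (Nat.not_even_iff_odd.2 hi.2)) hi1.2
  · rw [card_image_add_natCast a fun i hi => by have := hlt i hi; omega, card_filter_odd_range]
    obtain ⟨l, rfl⟩ := hodd
    omega
  · obtain ⟨i, hi, rfl⟩ := mem_image.1 hs
    simp only [mem_filter, mem_range] at hi
    exact add_natCast_mem_Iev_arc hodd hL hi.1 hi.2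

lemma IoddF_arc {a : ZMod N} {L : ℕ} (hodd : Odd L) (hL : L < N) :
    IoddF (cadj N) (arc a L) = {i ∈ range L | Even i}.image fun i : ℕ => a + i := by
  classical
  ext x
  obtain ⟨i, hi, rfl⟩ := exists_eq_add_natCast a x
  rw [IoddF, mem_filter, add_natCast_mem_arc_iff hL.le hi,
    add_natCast_mem_image_iff (fun j hj => by simp at hj; omega) hi, mem_filter, mem_range,
    ← Nat.not_odd_iff_even]
  exact and_congr_right fun hiL => not_congr
    ⟨odd_of_add_natCast_mem_Iev_arc hL hi, add_natCast_mem_Iev_arc hodd hL hiL⟩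

lemma univ_sdiff_pair_add_one (hN : 3 ≤ N) (t : ZMod N) :
    univ \ {t, t + 1} = arc (t + ((2 : ℕ) : ZMod N)) (N - 2) := by
  ext x
  obtain ⟨i, hi, rfl⟩ := exists_eq_add_natCast t x
  have h0 : t + (i : ZMod N) = t ↔ i = 0 := by
    rw [add_eq_left, ← Nat.cast_zero, natCast_inj_of_lt hi (by omega)]
  have h1 : t + (i : ZMod N) = t + 1 ↔ i = 1 := by
    rw [add_right_inj, ← Nat.cast_one, natCast_inj_of_lt hi (by omega)]
  simp only [mem_sdiff, mem_univ, mem_insert, mem_singleton, true_and, h0, h1,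
    add_natCast_mem_arc_add_iff (by omega : 2 + (N - 2) ≤ N) hi]
  omega

lemma add_one_notMem_IoddF_arc {a : ZMod N} {L : ℕ} (hodd : Odd L) (hL : L < N) :
    ∀ s ∈ IoddF (cadj N) (arc a L), s + 1 ∉ IoddF (cadj N) (arc a L) := by
  rw [IoddF_arc hodd hL]
  refine add_one_notMem_image_add_natCast (fun i hi => ?_) fun i hi hi1 => ?_
  · simp only [mem_filter, mem_range] at hi
    omega
  · simp only [mem_filter] at hi hi1
    exact Nat.not_even_iff_odd.2 (Nat.odd_add_one.2 (Nat.not_odd_iff_even.2 hi.2)) hi1.2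

lemma two_mul_card_IoddF_arc {a : ZMod N} {L : ℕ} (hodd : Odd L) (hL : L < N) :
    2 * #(IoddF (cadj N) (arc a L)) = L + 1 := by
  rw [IoddF_arc hodd hL, card_image_add_natCast a fun i hi => by simp at hi; omega,
    card_filter_even_range]
  obtain ⟨l, rfl⟩ := hodd
  omega

end Members

section EdgeForm

open QuadraticMap LinearMap.BilinMap

lemma eSum_eVec_apply {N : ℕ} (X : Finset (ZMod N)) (s : ZMod N) :
    eSum (eVec N) X s = if s ∈ X then 1 else 0 := by
  simp [eSum, eVec, Finset.sum_apply, Pi.single_apply]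

lemma subset_suppB_of_eSum_mem_LB {N : ℕ} {B : Finset (Finset (ZMod N))}
    {X : Finset (ZMod N)} (h : eSum (eVec N) X ∈ LB (eVec N) B) : X ⊆ suppB B := by
  intro x hx
  by_contra hxB
  have hle : LB (eVec N) B ≤ LinearMap.ker (LinearMap.proj x : Vc N →ₗ[ZMod 2] ZMod 2) := by
    rw [LB, Submodule.span_le]
    rintro _ ⟨I, hI, rfl⟩
    have : x ∉ I := fun hxI => hxB (mem_biUnion.2 ⟨I, hI, hxI⟩)
    simp [eSum_eVec_apply, this]
  simpa [eSum_eVec_apply, hx] using hle h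

variable (N : ℕ) [NeZero N]

def edgeForm : LinearMap.BilinForm (ZMod 2) (Vc N) :=
  LinearMap.mk₂ (ZMod 2) (fun u v => ∑ s, u s * v (s + 1))
    (fun u u' v => by simp [add_mul, sum_add_distrib])
    (fun c u v => by simp [mul_sum, mul_assoc])
    (fun u v v' => by simp [mul_add, sum_add_distrib])
    (fun c u v => by simp [mul_sum, mul_left_comm])

abbrev edgeQuad : QuadraticForm (ZMod 2) (Vc N) := (edgeForm N).toQuadraticMap

variable {N}

lemma eSum_eVec_univ : eSum (eVec N) univ = 1 := by
  ext s
  simp [eSum_eVec_apply]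

lemma edgeForm_eSum (X Y : Finset (ZMod N)) :
    edgeForm N (eSum (eVec N) X) (eSum (eVec N) Y) = #{s ∈ X | s + 1 ∈ Y} := by
  simp only [edgeForm, LinearMap.mk₂_apply, eSum_eVec_apply, mul_ite, mul_one, mul_zero,
    ← ite_and, sum_boole]
  congr 2
  ext s
  simp [and_comm]

lemma polar_edgeQuad_one (v : Vc N) : polar (edgeQuad N) v 1 = 0 := by
  rw [polar_toQuadraticMap]
  simp only [edgeForm, LinearMap.mk₂_apply, Pi.one_apply, mul_one, one_mul]
  rw [Fintype.sum_equiv (Equiv.addRight (1 : ZMod N)) (fun s => v (s + 1)) v fun _ => rfl]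
  exact CharTwo.add_self_eq_zero _

lemma edgeQuad_one (hodd : Odd N) : edgeQuad N 1 = 1 := by
  simp [edgeForm, ZMod.natCast_eq_one_iff_odd.2 hodd]

lemma edgeQuad_eSum_arc (a : ZMod N) {L : ℕ} (hodd : Odd L) (hL : L < N) :
    edgeQuad N (eSum (eVec N) (arc a L)) = 0 := by
  have hedges : {s ∈ arc a L | s + 1 ∈ arc a L} = arc a (L - 1) := by
    ext x
    obtain ⟨i, hi, rfl⟩ := exists_eq_add_natCast a x
    rw [mem_filter, add_natCast_mem_arc_iff hL.le hi, add_natCast_mem_arc_iff (by omega) hi]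
    by_cases hiL : i + 1 < N
    · rw [add_assoc, ← Nat.cast_add_one, add_natCast_mem_arc_iff hL.le hiL]
      omega
    · omega
  rw [toQuadraticMap_apply, edgeForm_eSum, hedges, card_arc a (by omega),
    ZMod.natCast_eq_zero_iff_even]
  obtain ⟨k, rfl⟩ := hodd
  exact ⟨k, by omega⟩

lemma edgeQuad_eSum_of_independent {X : Finset (ZMod N)} (h : ∀ s ∈ X, s + 1 ∉ X) :
    edgeQuad N (eSum (eVec N) X) = 0 := by
  rw [toQuadraticMap_apply, edgeForm_eSum, filter_false_of_mem h, card_empty, Nat.cast_zero]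

lemma polar_edgeQuad_eSum_of_separated {X Y : Finset (ZMod N)} (h : Separated X Y) :
    polar (edgeQuad N) (eSum (eVec N) X) (eSum (eVec N) Y) = 0 := by
  rw [polar_toQuadraticMap, edgeForm_eSum, edgeForm_eSum,
    filter_false_of_mem fun s hs hs1 => (h s hs _ hs1).2 (Or.inl rfl),
    filter_false_of_mem fun s hs hs1 => (h _ hs1 s hs).2 (Or.inr rfl)]
  simp

lemma polar_edgeQuad_eSum_of_interior {X Y : Finset (ZMod N)}
    (h : ∀ s ∈ Y, s - 1 ∈ X ∧ s + 1 ∈ X) :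
    polar (edgeQuad N) (eSum (eVec N) X) (eSum (eVec N) Y) = 0 := by
  have hXY : {s ∈ X | s + 1 ∈ Y} = Y.image (· - 1) := by
    ext s
    simp only [mem_filter, mem_image]
    constructor
    · rintro ⟨-, hs⟩
      exact ⟨s + 1, hs, add_sub_cancel_right s 1⟩
    · rintro ⟨y, hy, rfl⟩
      exact ⟨(h y hy).1, by rwa [sub_add_cancel]⟩
  have hYX : {s ∈ Y | s + 1 ∈ X} = Y := filter_true_of_mem fun s hs => (h s hs).2
  rw [polar_toQuadraticMap, edgeForm_eSum, edgeForm_eSum, hXY, hYX,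
    card_image_of_injective _ (sub_left_injective (b := (1 : ZMod N)))]
  exact CharTwo.add_self_eq_zero _

lemma edgeQuad_eq_zero_of_mem_LB (hN : 3 ≤ N) {B : Finset (Finset (ZMod N))}
    (hB : B ∈ phiSet (cadj N)) {v : Vc N} (hv : v ∈ LB (eVec N) B) : edgeQuad N v = 0 := by
  refine (edgeQuad N).eq_zero_of_mem_span ?_ ?_ hv
  · rintro _ ⟨I, hI, rfl⟩
    obtain ⟨a, L, rfl, hodd, hL⟩ := (hB.1 I hI).exists_eq_arc hN
    exact edgeQuad_eSum_arc a hodd hL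
  · rintro _ ⟨I, hI, rfl⟩ _ ⟨J, hJ, rfl⟩ hne
    have hIJ : I ≠ J := fun h => hne (h ▸ rfl)
    by_cases hsub : I ⊆ J
    · rw [polar_comm]
      exact polar_edgeQuad_eSum_of_interior fun s hs => (prec_of_ssubset hB hJ hI
        (hsub.ssubset_of_ne hIJ)).sub_one_mem_and_add_one_mem hN (hB.1 J hJ) (hB.1 I hI) hs
    by_cases hsub' : J ⊆ I
    · exact polar_edgeQuad_eSum_of_interior fun s hs => (prec_of_ssubset hB hI hJ
        (hsub'.ssubset_of_ne hIJ.symm)).sub_one_mem_and_add_one_mem hN (hB.1 I hI) (hB.1 J hJ) hs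
    · exact polar_edgeQuad_eSum_of_separated (separated_of_not_subset hB hI hJ hsub hsub')

lemma LB_ebar (B : Finset (Finset (ZMod N))) :
    LB (ebar N) B = (LB (eVec N) B).map (piQ N) := by
  rw [LB, LB, Submodule.map_span, ← Set.image_comp]
  congr 2
  ext I : 1
  simp [eSum, ebar, map_sum]

lemma eSum_mem_LB_of_piQ_mem (hN : 3 ≤ N) (hodd : Odd N) {B : Finset (Finset (ZMod N))}
    (hB : B ∈ phiSet (cadj N)) {A : Finset (ZMod N)} (hA : ∀ s ∈ A, s + 1 ∉ A)
    (h : piQ N (eSum (eVec N) A) ∈ LB (ebar N) B) : eSum (eVec N) A ∈ LB (eVec N) B := by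
  rw [LB_ebar] at h
  obtain ⟨w, hw, hwA⟩ := Submodule.mem_map.1 h
  rw [piQ, Submodule.mkQ_apply, Submodule.mkQ_apply, Submodule.Quotient.eq, radN,
    Submodule.mem_span_singleton, eSum_eVec_univ] at hwA
  obtain ⟨c, hc⟩ := hwA
  rw [eq_sub_iff_add_eq] at hc
  obtain rfl | rfl : c = 0 ∨ c = 1 := (by decide : ∀ c : ZMod 2, c = 0 ∨ c = 1) c
  · rwa [← hc, zero_smul, zero_add] at hw
  · have hQ : edgeQuad N (eSum (eVec N) A + 1) = 1 := by
      have := polar_edgeQuad_one (eSum (eVec N) A)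
      rwa [polar, edgeQuad_eSum_of_independent hA, edgeQuad_one hodd, sub_zero, sub_eq_zero]
        at this
    rw [one_smul, add_comm] at hc
    have := edgeQuad_eq_zero_of_mem_LB hN hB hw
    rw [← hc, hQ] at this
    exact absurd this one_ne_zero

end EdgeForm

section Thicken

variable {N : ℕ}

def thicken (X : Finset (ZMod N)) : Finset (ZMod N) := X ∪ X.image (· + 1)

lemma subset_thicken (X : Finset (ZMod N)) : X ⊆ thicken X := subset_union_left

lemma add_one_mem_thicken {X : Finset (ZMod N)} {s : ZMod N} (hs : s ∈ X) : s + 1 ∈ thicken X :=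
  mem_union_right _ (mem_image_of_mem _ hs)

lemma thicken_mono {X Y : Finset (ZMod N)} (h : X ⊆ Y) : thicken X ⊆ thicken Y :=
  union_subset_union h (image_subset_image h)

lemma card_thicken_of_independent {T : Finset (ZMod N)} (h : ∀ s ∈ T, s + 1 ∉ T) :
    #(thicken T) = 2 * #T := by
  rw [thicken, card_union_of_disjoint, card_image_of_injective _ (add_left_injective 1), two_mul]
  refine disjoint_left.2 fun s hs hs' => ?_
  obtain ⟨r, hr, rfl⟩ := mem_image.1 hs'
  exact h r hr hs

lemma Separated.disjoint_thicken {X Y : Finset (ZMod N)} (h : Separated X Y) :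
    Disjoint (thicken X) (thicken Y) := by
  refine disjoint_left.2 fun z hzX hzY => ?_
  simp only [thicken, mem_union, mem_image] at hzX hzY
  rcases hzX with hx | ⟨x, hx, rfl⟩ <;> rcases hzY with hy | ⟨y, hy, hyx⟩
  · exact (h _ hx _ hy).1 rfl
  · exact (h _ hx y hy).2 (Or.inr hyx.symm)
  · exact (h x hx _ hy).2 (Or.inl rfl)
  · exact (h x hx y hy).1 (add_right_cancel hyx.symm)

lemma thicken_subset_erase {I J : Finset (ZMod N)} (hJI : J ⊆ I)
    (hJ : ∀ s ∈ J, s - 1 ∈ I ∧ s + 1 ∈ I) {a : ZMod N} (ha : a - 1 ∉ I) :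
    thicken J ⊆ I.erase a := by
  intro x hx
  simp only [thicken, mem_union, mem_image] at hx
  rcases hx with hxJ | ⟨s, hs, rfl⟩
  · exact mem_erase.2 ⟨fun hxa => ha (hxa ▸ (hJ x hxJ).1), hJI hxJ⟩
  · exact mem_erase.2 ⟨fun hsa => ha (by rw [← hsa, add_sub_cancel_right]; exact hJI hs),
      (hJ s hs).2⟩

lemma thicken_arc (a : ZMod N) {L : ℕ} (hL : 0 < L) : thicken (arc a L) = arc a (L + 1) := by
  ext x
  simp only [thicken, mem_union, mem_image, mem_arc]
  constructor
  · rintro (⟨i, hi, rfl⟩ | ⟨_, ⟨i, hi, rfl⟩, rfl⟩)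
    · exact ⟨i, by omega, rfl⟩
    · exact ⟨i + 1, by omega, by push_cast; ring⟩
  · rintro ⟨i, hi, rfl⟩
    rcases i with _ | i
    · exact Or.inl ⟨0, hL, rfl⟩
    · exact Or.inr ⟨_, ⟨i, by omega, rfl⟩, by push_cast; ring⟩

variable [NeZero N]

lemma card_thicken_of_calI1 (hN : 3 ≤ N) {J : Finset (ZMod N)} (hJ : CalI1 (cadj N) J) :
    #(thicken J) = #J + 1 := by
  obtain ⟨a, L, rfl, hodd, hL⟩ := hJ.exists_eq_arc hN
  rw [thicken_arc a hodd.pos, card_arc a hL, card_arc a hL.le]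

lemma two_mul_card_le_of_independent (hN : 3 ≤ N) {J T : Finset (ZMod N)}
    (hJ : CalI1 (cadj N) J) (hT : ∀ s ∈ T, s + 1 ∉ T) (hTJ : T ⊆ J) :
    2 * #T ≤ #J + 1 := by
  rw [← card_thicken_of_independent hT, ← card_thicken_of_calI1 hN hJ]
  exact card_le_card (thicken_mono hTJ)

lemma sum_card_add_one_le (hN : 3 ≤ N) {C : Finset (Finset (ZMod N))}
    (hC : ∀ J ∈ C, CalI1 (cadj N) J) (hsep : (C : Set (Finset (ZMod N))).Pairwise Separated)
    {U : Finset (ZMod N)} (hU : ∀ J ∈ C, thicken J ⊆ U) : ∑ J ∈ C, (#J + 1) ≤ #U :=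
  calc ∑ J ∈ C, (#J + 1) = ∑ J ∈ C, #(thicken J) :=
        sum_congr rfl fun J hJ => (card_thicken_of_calI1 hN (hC J hJ)).symm
    _ = #(C.biUnion thicken) :=
        (card_biUnion fun _ hJ _ hK hJK => (hsep hJ hK hJK).disjoint_thicken).symm
    _ ≤ #U := card_le_card (biUnion_subset.2 hU)

end Thicken

section Counting

variable {N : ℕ} {B : Finset (Finset (ZMod N))}

lemma separated_of_mem_maxElts (hB : B ∈ phiSet (cadj N)) {C : Finset (Finset (ZMod N))}
    (hCB : C ⊆ B) {R R' : Finset (ZMod N)} (hR : R ∈ maxElts C) (hR' : R' ∈ maxElts C)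
    (hne : R ≠ R') : Separated R R' := by
  rw [mem_maxElts] at hR hR'
  exact separated_of_not_subset hB (hCB hR.1) (hCB hR'.1)
    (fun h => hR.2 R' hR'.1 (h.ssubset_of_ne hne))
    (fun h => hR'.2 R hR.1 (h.ssubset_of_ne hne.symm))

lemma card_filter_subset_eq_sum_add_one (hB : B ∈ phiSet (cadj N)) {I : Finset (ZMod N)}
    (hI : I ∈ B) :
    #{K ∈ B | K ⊆ I} = ∑ J ∈ maxElts {K ∈ B | K ⊂ I}, #{K ∈ B | K ⊆ J} + 1 := by
  have hinsert : {K ∈ B | K ⊆ I} = insert I {K ∈ B | K ⊂ I} := by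
    ext K
    simp only [mem_filter, mem_insert, subset_iff_ssubset_or_eq]
    constructor
    · rintro ⟨hK, hKI | rfl⟩
      exacts [Or.inr ⟨hK, hKI⟩, Or.inl rfl]
    · rintro (rfl | ⟨hK, hKI⟩)
      exacts [⟨hI, Or.inr rfl⟩, ⟨hK, Or.inl hKI⟩]
  have hchild : ∀ J ∈ maxElts {K ∈ B | K ⊂ I},
      {K ∈ {K ∈ B | K ⊂ I} | K ⊆ J} = {K ∈ B | K ⊆ J} := fun J hJ => by
    rw [filter_filter]
    refine filter_congr fun K _ => and_iff_right_of_imp fun hKJ => ?_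
    exact hKJ.trans_ssubset (mem_filter.1 (mem_maxElts.1 hJ).1).2
  rw [hinsert, card_insert_of_notMem (by simp), card_eq_sum_maxElts
    (fun K hK => nonempty_of_mem_phiSet hB (mem_filter.1 hK).1)
    (fun R hR R' hR' hne => (separated_of_mem_maxElts hB (filter_subset _ _) hR hR' hne).disjoint),
    sum_congr rfl fun J hJ => congrArg card (hchild J hJ)]

lemma sum_card_filter_subset_add_one_le (hB : B ∈ phiSet (cadj N)) {I : Finset (ZMod N)}
    (hI : I ∈ B) {k : ℕ} {f : Fin k → Finset (ZMod N)} (hf : ∀ j, f j ∈ B ∧ f j ⊂ I)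
    (hdisj : ∀ j j', j ≠ j' → Disjoint (f j) (f j')) :
    ∑ j, #{K ∈ B | K ⊆ f j} + 1 ≤ #{K ∈ B | K ⊆ I} := by
  rw [← card_biUnion, ← card_insert_of_notMem]
  · refine card_le_card (insert_subset (mem_filter.2 ⟨hI, subset_rfl⟩) (biUnion_subset.2 ?_))
    exact fun j _ K hK =>
      mem_filter.2 ⟨(mem_filter.1 hK).1, (mem_filter.1 hK).2.trans (hf j).2.subset⟩
  · simp only [mem_biUnion, mem_filter, not_exists, not_and]
    exact fun j _ _ hIj => (hf j).2.not_subset hIj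
  · intro j _ j' _ hjj'
    refine disjoint_left.2 fun K hK hK' => ?_
    obtain ⟨x, hx⟩ := nonempty_of_mem_phiSet hB (mem_filter.1 hK).1
    exact disjoint_left.1 (hdisj j j' hjj') ((mem_filter.1 hK).2 hx) ((mem_filter.1 hK').2 hx)

variable [NeZero N]

lemma two_mul_card_filter_subset_le (hN : 3 ≤ N) (hB : B ∈ phiSet (cadj N))
    {I : Finset (ZMod N)} (hI : I ∈ B) : 2 * #{K ∈ B | K ⊆ I} ≤ #I + 1 := by
  induction I using Finset.strongInduction with
  | H I ih =>
  rw [card_filter_subset_eq_sum_add_one hB hI]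
  obtain ⟨a, L, rfl, hodd, hL⟩ := (hB.1 _ hI).exists_eq_arc hN
  set C := maxElts {K ∈ B | K ⊂ arc a L}
  have hC : ∀ J ∈ C, J ∈ B ∧ J ⊂ arc a L := fun J hJ => mem_filter.1 (mem_maxElts.1 hJ).1
  have hrec : ∑ J ∈ C, 2 * #{K ∈ B | K ⊆ J} ≤ ∑ J ∈ C, (#J + 1) :=
    sum_le_sum fun J hJ => ih J (hC J hJ).2 (hC J hJ).1
  have hpack : ∑ J ∈ C, (#J + 1) ≤ #((arc a L).erase a) := by
    refine sum_card_add_one_le hN (fun J hJ => hB.1 J (hC J hJ).1)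
      (fun J hJ J' hJ' hne => separated_of_mem_maxElts hB (filter_subset _ _) hJ hJ' hne)
      fun J hJ => thicken_subset_erase (hC J hJ).2.subset (fun s hs => ?_)
        (sub_one_notMem_arc a hL)
    exact (prec_of_ssubset hB hI (hC J hJ).1 (hC J hJ).2).sub_one_mem_and_add_one_mem hN
      (hB.1 _ hI) (hB.1 J (hC J hJ).1) hs
  rw [card_erase_of_mem (self_mem_arc a hodd.pos), card_arc a hL.le] at hpack
  rw [mul_add, mul_sum, card_arc a hL.le]
  have := hodd.pos
  omega

lemma le_two_mul_card_filter_subset (hN : 3 ≤ N) (hB : B ∈ phiSet (cadj N))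
    {I : Finset (ZMod N)} (hI : I ∈ B) : #I + 1 ≤ 2 * #{K ∈ B | K ⊆ I} := by
  induction I using Finset.strongInduction with
  | H I ih =>
  obtain ⟨k, f, hf, hdisj, hcov⟩ := hB.2.2 I hI
  have hf' : ∀ j, f j ∈ B ∧ f j ⊂ I := fun j => ⟨(hf j).1, (hf j).2.1⟩
  have hsub := sum_card_filter_subset_add_one_le hB hI hf' hdisj
  have hrec : ∑ j, (#(f j) + 1) ≤ ∑ j, 2 * #{K ∈ B | K ⊆ f j} :=
    sum_le_sum fun j _ => ih _ (hf' j).2 (hf' j).1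
  obtain ⟨a, L, rfl, hodd, hL⟩ := (hB.1 _ hI).exists_eq_arc hN
  obtain ⟨O, hO_indep, hO_card, hO_Iev⟩ := exists_independent_subset_Iev_arc a hodd hL
  have hO_cover : #O ≤ ∑ j, #(f j ∩ O) := by
    refine (card_le_card fun s hs => ?_).trans card_biUnion_le
    obtain ⟨j, hj⟩ := Set.mem_iUnion.1 (hcov (hO_Iev s hs))
    exact mem_biUnion.2 ⟨j, mem_univ j, mem_inter.2 ⟨hj, hs⟩⟩
  have hpieces : ∑ j, 2 * #(f j ∩ O) ≤ ∑ j, (#(f j) + 1) :=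
    sum_le_sum fun j _ => two_mul_card_le_of_independent hN (hB.1 _ (hf j).1)
      (fun s hs hs1 => hO_indep s (mem_inter.1 hs).2 (mem_inter.1 hs1).2) inter_subset_left
  rw [← mul_sum] at hpieces hrec
  rw [card_arc a hL.le]
  omega

lemma two_mul_card_eq_sum_maxElts (hN : 3 ≤ N) (hB : B ∈ phiSet (cadj N)) :
    2 * #B = ∑ R ∈ maxElts B, (#R + 1) := by
  rw [card_eq_sum_maxElts (fun K hK => nonempty_of_mem_phiSet hB hK)
    fun R hR R' hR' hne => (separated_of_mem_maxElts hB subset_rfl hR hR' hne).disjoint, mul_sum]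
  refine sum_congr rfl fun R hR => le_antisymm ?_ ?_
  exacts [two_mul_card_filter_subset_le hN hB (mem_maxElts.1 hR).1,
    le_two_mul_card_filter_subset hN hB (mem_maxElts.1 hR).1]

omit [NeZero N] in
lemma card_eq_sum_card_inter_maxElts (hB : B ∈ phiSet (cadj N)) {A : Finset (ZMod N)}
    (hAB : A ⊆ suppB B) : #A = ∑ R ∈ maxElts B, #(A ∩ R) := by
  rw [← card_biUnion fun R hR R' hR' hne => disjoint_of_subset_left inter_subset_right
    (disjoint_of_subset_right inter_subset_right
      (separated_of_mem_maxElts hB subset_rfl hR hR' hne).disjoint)]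
  congr 1
  ext s
  simp only [mem_biUnion, mem_inter]
  refine ⟨fun hs => ?_, fun ⟨_, _, hs, _⟩ => hs⟩
  obtain ⟨I, hI, hsI⟩ := mem_biUnion.1 (hAB hs)
  obtain ⟨R, hR, hIR⟩ := exists_mem_maxElts_superset hI
  exact ⟨R, hR, hs, hIR hsI⟩

lemma two_mul_card_add_one_eq_of_subset_suppB (hN : 3 ≤ N) (hodd : Odd N)
    (hB : B ∈ phiSet (cadj N)) {A : Finset (ZMod N)} (hA : ∀ s ∈ A, s + 1 ∉ A)
    (hAB : A ⊆ suppB B)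
    (hAcard : N ≤ 2 * #A + 1) :
    2 * #B + 1 = N ∧ ∀ R ∈ maxElts B, 2 * #(A ∩ R) = #R + 1 := by
  have hB_card := two_mul_card_eq_sum_maxElts hN hB
  have hA_card := card_eq_sum_card_inter_maxElts hB hAB
  have hpack : ∑ R ∈ maxElts B, (#R + 1) ≤ N := by
    simpa using sum_card_add_one_le hN (fun R hR => hB.1 R (mem_maxElts.1 hR).1)
      (fun R hR R' hR' hne => separated_of_mem_maxElts hB subset_rfl hR hR' hne)
      (U := univ) fun _ _ => subset_univ _
  have hpieces : ∀ R ∈ maxElts B, 2 * #(A ∩ R) ≤ #R + 1 := fun R hR =>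
    two_mul_card_le_of_independent hN (hB.1 R (mem_maxElts.1 hR).1)
      (fun s hs hs1 => hA s (mem_inter.1 hs).1 (mem_inter.1 hs1).1) inter_subset_right
  have hsum := sum_le_sum hpieces
  rw [← mul_sum, ← hA_card] at hsum
  obtain ⟨n, rfl⟩ := hodd
  refine ⟨by omega, (sum_eq_sum_iff_of_le hpieces).1 ?_⟩
  rw [← mul_sum, ← hA_card]
  omega

lemma notMem_suppB_of_two_mul_card_inter_eq (hN : 3 ≤ N) (hB : B ∈ phiSet (cadj N))
    {A : Finset (ZMod N)} (hA : ∀ s ∈ A, s + 1 ∉ A)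
    (htight : ∀ R ∈ maxElts B, 2 * #(A ∩ R) = #R + 1) {t : ZMod N} (ht : t ∉ A)
    (ht1 : t + 1 ∉ A) : t ∉ suppB B ∧ t + 1 ∉ suppB B := by
  have hroot : ∀ R ∈ maxElts B, t + 1 ∉ thicken R := by
    intro R hR hmem
    have hRc := hB.1 R (mem_maxElts.1 hR).1
    have hlt : thicken (A ∩ R) ⊂ thicken R := by
      refine (ssubset_iff_of_subset (thicken_mono inter_subset_right)).2
        ⟨t + 1, hmem, fun h => ?_⟩
      rcases mem_union.1 h with h | h
      · exact ht1 (mem_inter.1 h).1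
      · obtain ⟨s, hs, hst⟩ := mem_image.1 h
        exact ht (add_right_cancel hst ▸ (mem_inter.1 hs).1)
    have := card_lt_card hlt
    rw [card_thicken_of_independent fun s hs hs1 => hA s (mem_inter.1 hs).1 (mem_inter.1 hs1).1,
      card_thicken_of_calI1 hN hRc, htight R hR] at this
    omega
  constructor <;> intro hmem <;> obtain ⟨I, hI, hsI⟩ := mem_biUnion.1 hmem <;>
    obtain ⟨R, hR, hIR⟩ := exists_mem_maxElts_superset hI
  · exact hroot R hR (add_one_mem_thicken (hIR hsI))
  · exact hroot R hR (subset_thicken R (hIR hsI))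

end Counting

/-- if `[ee] ∈ L_B` then `supp(B) ∩ ee = ∅` and `|B| = (N-1)/2`. -/
theorem statement13 (N : ℕ) [NeZero N] (hN : 3 ≤ N) (hodd : Odd N)
    (t t' : ZMod N) (hadj : cadj N t t')
    (B : Finset (Finset (ZMod N))) (hB : B ∈ phiSet (cadj N))
    (h : piQ N (eSum (eVec N)
        (IoddF (cadj N) (Finset.univ \ ({t, t'} : Finset (ZMod N))))) ∈ LB (ebar N) B) :
    suppB B ∩ ({t, t'} : Finset (ZMod N)) = ∅ ∧ B.card = (N - 1) / 2 := by
  wlog ht' : t' = t + 1 generalizing t t'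
  · obtain rfl : t = t' + 1 := hadj.resolve_left ht'
    rw [pair_comm] at h ⊢
    exact this t' (t' + 1) (Or.inl rfl) h rfl
  subst ht'
  have hN2 : Odd (N - 2) := by
    obtain ⟨n, rfl⟩ := hodd
    exact ⟨n - 1, by omega⟩
  set A := IoddF (cadj N) (univ \ {t, t + 1})
  have hA_indep : ∀ s ∈ A, s + 1 ∉ A := by
    simpa only [A, univ_sdiff_pair_add_one hN] using add_one_notMem_IoddF_arc hN2 (by omega)
  have hA_card : 2 * #A = N - 1 := by
    simp only [A, univ_sdiff_pair_add_one hN, two_mul_card_IoddF_arc hN2 (by omega : N - 2 < N)]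
    omega
  have hA_compl : A ⊆ univ \ {t, t + 1} := IoddF_subset _ _
  have hAB := subset_suppB_of_eSum_mem_LB (eSum_mem_LB_of_piQ_mem hN hodd hB hA_indep h)
  obtain ⟨hB_card, htight⟩ :=
    two_mul_card_add_one_eq_of_subset_suppB hN hodd hB hA_indep hAB (by omega)
  obtain ⟨ht, ht1⟩ := notMem_suppB_of_two_mul_card_inter_eq hN hB hA_indep htight (t := t)
    (fun hmem => by simpa using hA_compl hmem) (fun hmem => by simpa using hA_compl hmem)
  refine ⟨?_, by omega⟩
  rw [← disjoint_iff_inter_eq_empty, disjoint_insert_right, disjoint_singleton_right]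
  exact ⟨ht, ht1⟩
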